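/- Let c > 0, W : ℝ → ℝ continuous, and suppose φ₀ ∈ C²(ℝ) satisfies -cφ₀'' + Wφ₀ = 0 with φ₀ > 0 everywhere. Then for every λ < 0 there is no nonzero compactly supported smooth φ with ⟨φ, (-c∂ₓ² + W)φ⟩ < λ‖φ‖²·0, i.e. inf over nonzero compactly supported smooth φ of ⟨φ,(-c∂ₓ²+W)φ⟩/‖φ‖² ≥ 0. -/

import Mathlib

open MeasureTheory

theorem allegretto_piepenbrink (c : ℝ) (hc : 0 < c) (W : ℝ → ℝ) (hW : Continuous W)
    (φ₀ : ℝ → ℝ) (hφ₀ : ContDiff ℝ 2 φ₀) (hφ₀pos : ∀ x, 0 < φ₀ x)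
    (heq : ∀ x, -c * deriv (deriv φ₀) x + W x * φ₀ x = 0) :
    ∀ φ : ℝ → ℝ, ContDiff ℝ (⊤ : ℕ∞) φ → HasCompactSupport φ → φ ≠ 0 →
      0 ≤ (∫ x : ℝ, (c * (deriv φ x) ^ 2 + W x * φ x ^ 2)) / (∫ x : ℝ, φ x ^ 2) := by
  intro φ hφ hsupp hne
  have hφ₀ne : ∀ x, φ₀ x ≠ 0 := fun x => (hφ₀pos x).ne'
  -- basic regularity facts
  have hφ1 : ContDiff ℝ 1 φ := hφ.of_le (by simp)
  have hφ₀1 : ContDiff ℝ 1 φ₀ := hφ₀.of_le (by norm_num)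
  have hdφ₀ : ContDiff ℝ 1 (deriv φ₀) := by
    have h := (contDiff_succ_iff_deriv (n := 1)).1 (by exact_mod_cast hφ₀)
    exact h.2.2
  have hdφcont : Continuous (deriv φ) := hφ.continuous_deriv (by simp)
  have hdφ₀cont : Continuous (deriv φ₀) := hdφ₀.continuous
  -- ground state substitution functions
  set f1 : ℝ → ℝ := fun x => c * (deriv φ x * φ₀ x - φ x * deriv φ₀ x) ^ 2 / (φ₀ x) ^ 2
    with hf1def
  set g : ℝ → ℝ := fun x => deriv φ₀ x * (φ x) ^ 2 / φ₀ x with hgdef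
  -- key pointwise identity
  have key : ∀ x, c * (deriv φ x) ^ 2 + W x * φ x ^ 2 = f1 x + c * deriv g x := by
    intro x
    have hφd : HasDerivAt φ (deriv φ x) x :=
      (hφ1.differentiable one_ne_zero x).hasDerivAt
    have hφ₀d : HasDerivAt φ₀ (deriv φ₀ x) x :=
      (hφ₀1.differentiable one_ne_zero x).hasDerivAt
    have hdφ₀d : HasDerivAt (deriv φ₀) (deriv (deriv φ₀) x) x :=
      (hdφ₀.differentiable one_ne_zero x).hasDerivAt
    have hg : HasDerivAt g
        (((deriv (deriv φ₀) x * φ x ^ 2 + deriv φ₀ x * (2 * φ x * deriv φ x)) * φ₀ x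
          - deriv φ₀ x * φ x ^ 2 * deriv φ₀ x) / φ₀ x ^ 2) x := by
      have hnum : HasDerivAt (fun x => deriv φ₀ x * (φ x) ^ 2)
          (deriv (deriv φ₀) x * φ x ^ 2 + deriv φ₀ x * (2 * φ x * deriv φ x)) x := by
        have hsq : HasDerivAt (fun x => (φ x) ^ 2) (2 * φ x * deriv φ x) x := by
          have := hφd.fun_pow 2
          simpa [mul_comm, mul_assoc, mul_left_comm] using this
        exact hdφ₀d.mul hsq
      exact hnum.div hφ₀d (hφ₀ne x)
    rw [hg.deriv]
    have hW' : W x * φ₀ x = c * deriv (deriv φ₀) x := by linarith [heq x]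
    have h0 : φ₀ x ≠ 0 := hφ₀ne x
    have hWx : W x = c * deriv (deriv φ₀) x / φ₀ x := by
      field_simp
      linarith [heq x]
    rw [hf1def, hWx]
    field_simp
    ring
  -- compact support facts
  have hcs_f1 : HasCompactSupport f1 := by
    have hnum : HasCompactSupport (fun x => deriv φ x * φ₀ x - φ x * deriv φ₀ x) := by
      have h1 : HasCompactSupport (fun x => deriv φ x * φ₀ x) :=
        HasCompactSupport.mul_right hsupp.deriv
      have h2 : HasCompactSupport (fun x => φ x * deriv φ₀ x) :=
        HasCompactSupport.mul_right hsupp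
      have h2n : HasCompactSupport (fun x => -(φ x * deriv φ₀ x)) :=
        h2.comp_left (g := Neg.neg) neg_zero
      rw [show (fun x => deriv φ x * φ₀ x - φ x * deriv φ₀ x)
          = (fun x => deriv φ x * φ₀ x) + (fun x => -(φ x * deriv φ₀ x)) from by
        funext x; simp [sub_eq_add_neg]]
      exact h1.add h2n
    have hsq : HasCompactSupport
        (fun x => (deriv φ x * φ₀ x - φ x * deriv φ₀ x) ^ 2) :=
      hnum.comp_left (g := fun t : ℝ => t ^ 2) (by simp)
    have : HasCompactSupport
        (fun x => (c / φ₀ x ^ 2) * (deriv φ x * φ₀ x - φ x * deriv φ₀ x) ^ 2) :=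
      HasCompactSupport.mul_left hsq
    have hEq : f1 = fun x => (c / φ₀ x ^ 2) * (deriv φ x * φ₀ x - φ x * deriv φ₀ x) ^ 2 := by
      funext x; rw [hf1def]; field_simp
    rw [hEq]; exact this
  have hcs_g : HasCompactSupport g := by
    have hsq : HasCompactSupport (fun x => (φ x) ^ 2) :=
      hsupp.comp_left (g := fun t : ℝ => t ^ 2) (by simp)
    have : HasCompactSupport (fun x => (deriv φ₀ x / φ₀ x) * (φ x) ^ 2) :=
      HasCompactSupport.mul_left hsq
    have hEq : g = fun x => (deriv φ₀ x / φ₀ x) * (φ x) ^ 2 := by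
      funext x; rw [hgdef]; ring
    rw [hEq]; exact this
  -- continuity facts
  have hcont_f1 : Continuous f1 := by
    apply Continuous.div
    · exact (continuous_const.mul (((hdφcont.mul hφ₀1.continuous).sub
        (hφ1.continuous.mul hdφ₀cont)).pow 2))
    · exact hφ₀1.continuous.pow 2
    · intro x; exact pow_ne_zero 2 (hφ₀ne x)
  have hg_smooth : ContDiff ℝ 1 g := by
    apply ContDiff.div
    · exact hdφ₀.mul (hφ1.pow 2)
    · exact hφ₀1
    · exact hφ₀ne
  have hcont_dg : Continuous (deriv g) := hg_smooth.continuous_deriv le_rfl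
  -- integrability
  have hint_f1 : Integrable f1 := hcont_f1.integrable_of_hasCompactSupport hcs_f1
  have hint_dg : Integrable (deriv g) :=
    hcont_dg.integrable_of_hasCompactSupport hcs_g.deriv
  have hint_cdg : Integrable (fun x => c * deriv g x) := hint_dg.const_mul c
  -- integral of deriv g is zero
  have hdg_zero : (∫ x : ℝ, deriv g x) = 0 := by
    have hIic := hcs_g.integral_Iic_deriv_eq hg_smooth 0
    have hIoi := hcs_g.integral_Ioi_deriv_eq hg_smooth 0
    have hsplit := intervalIntegral.integral_Iic_add_Ioi (f := deriv g) (b := (0 : ℝ))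
      hint_dg.integrableOn hint_dg.integrableOn
    rw [← hsplit, hIic, hIoi]; ring
  -- numerator is nonnegative
  have hnum_nonneg : 0 ≤ ∫ x : ℝ, (c * (deriv φ x) ^ 2 + W x * φ x ^ 2) := by
    have h1 : (∫ x : ℝ, (c * (deriv φ x) ^ 2 + W x * φ x ^ 2))
        = ∫ x : ℝ, (f1 x + c * deriv g x) := by
      congr 1; funext x; exact key x
    rw [h1, integral_add hint_f1 hint_cdg]
    have h2 : (∫ x : ℝ, c * deriv g x) = 0 := by
      rw [integral_const_mul, hdg_zero, mul_zero]
    rw [h2, add_zero]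
    apply integral_nonneg
    intro x
    apply div_nonneg (mul_nonneg hc.le (sq_nonneg _)) (sq_nonneg _)
  -- denominator is positive
  have hden_pos : 0 < ∫ x : ℝ, φ x ^ 2 := by
    have hint : Integrable (fun x => φ x ^ 2) :=
      (hφ1.continuous.pow 2).integrable_of_hasCompactSupport
        (hsupp.comp_left (g := fun t : ℝ => t ^ 2) (by simp) :
          HasCompactSupport ((fun t : ℝ => t ^ 2) ∘ φ))
    rw [integral_pos_iff_support_of_nonneg (fun x => sq_nonneg (φ x)) hint]
    have hs : Function.support (fun x => φ x ^ 2) = Function.support φ := by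
      ext x; simp [pow_eq_zero_iff]
    rw [hs]
    have hopen : IsOpen (Function.support φ) := hφ1.continuous.isOpen_support
    have hne' : (Function.support φ).Nonempty := by
      rcases Function.ne_iff.1 hne with ⟨x, hx⟩
      exact ⟨x, hx⟩
    exact hopen.measure_pos volume hne'
  exact div_nonneg hnum_nonneg hden_pos.le
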